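/- Fix N ≥ 1, finite words w1 and s (s nonempty) over a finite alphabet Σ, an ω-word w2, M > 2^{N+1}, and set w = w1·s^M·w2 and w' = w1·s^{M+1}·w2. If positions a_1, …, a_N, b_1, …, b_N ∈ ℕ together with the anchor positions satisfy the invariant with threshold 2·|s|, then for all i, j ∈ {1,…,N}: a_i = a_j iff b_i = b_j; a_i + 1 = a_j iff b_i + 1 = b_j; a_i < a_j iff b_i < b_j; and w(a_i) = w'(b_i). -/

import Mathlib

/-!
Conditions (1)–(3) of the invariant, read at two chosen positions, give the order and equality
clauses, and the successor clause because a distance of `1` is below the threshold `2·|s|`.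
For the letters, conditions (4)–(6) locate `b_i` relative to `a_i`: left of the block `s^M`
they coincide, right of it `b_i = a_i + |s|`, and inside it `a_i ≡ b_i (mod |s|)` while
condition (1) against the anchors keeps `b_i` inside the longer block `s^(M+1)`; in each case
both positions carry the same letter.
-/

namespace Stmt3

variable {Γ : Type*}

/-- `m`-fold concatenation of a finite word. -/
def lpow (u : List Γ) : ℕ → List Γ
  | 0 => []
  | m + 1 => u ++ lpow u m

/-- Concatenation of a finite word with an ω-word. -/
def wcat (u : List Γ) (w : ℕ → Γ) : ℕ → Γ := fun n =>
  if h : n < u.length then u.get ⟨n, h⟩ else w (n - u.length)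

/-- Distance on `ℕ∞ = ℕ ∪ {∞}`: any distance involving `∞` is `∞`. -/
def ndist (x y : ℕ∞) : ℕ∞ :=
  if x = ⊤ ∨ y = ⊤ then ⊤ else (x - y) + (y - x)

/-- The family of positions indexed by `{-3, -2, -1, 0} ∪ {1, …, m}`:
the anchors are `0`, `|w1|`, `|w1| + Mv·|s|` and `∞`, and index `j ∈ {1,…,m}`
is sent to the chosen position `a (j-1)`. -/
def posExt (w1len slen Mv m : ℕ) (a : Fin m → ℕ) : ℤ → ℕ∞ := fun j =>
  if j = -3 then 0
  else if j = -2 then (w1len : ℕ∞)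
  else if j = -1 then ((w1len + Mv * slen : ℕ) : ℕ∞)
  else if j = 0 then ⊤
  else if h : 0 < j ∧ j ≤ (m : ℤ) then ((a ⟨(j - 1).toNat, by omega⟩ : ℕ) : ℕ∞)
  else 0

/-- The invariant `𝔍` with threshold `t` for families `A`, `B` of positions
indexed by `{-3, …, m}` (conditions (1)–(6)). -/
def EFInv (slen t m : ℕ) (A B : ℤ → ℕ∞) : Prop :=
  ∀ j k : ℤ, -3 ≤ j → j ≤ (m : ℤ) → -3 ≤ k → k ≤ (m : ℤ) →
    ((A j ≤ A k ↔ B j ≤ B k) ∧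
     (ndist (A j) (A k) < (t : ℕ∞) ↔ ndist (B j) (B k) < (t : ℕ∞)) ∧
     (ndist (A j) (A k) < (t : ℕ∞) → A j + B k = B j + A k) ∧
     (A j ≤ A (-2) ∨ B j ≤ B (-2) → B j = A j) ∧
     (A (-1) ≤ A j ∨ B (-1) ≤ B j → B j = A j + (slen : ℕ∞)) ∧
     ((A (-2) < A j ∧ A j < A (-1)) ∨ (B (-2) < B j ∧ B j < B (-1)) →
       ∃ c : ℕ, ndist (A j) (B j) = ((c * slen : ℕ) : ℕ∞)))

lemma lpow_length (s : List Γ) (K : ℕ) : (lpow s K).length = K * s.length := by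
  induction K with
  | zero => simp [lpow]
  | succ K ih => simp [lpow, ih, Nat.succ_mul, Nat.add_comm]

lemma getElem_lpow (s : List Γ) (hs : 0 < s.length) (K q : ℕ) (hq : q < (lpow s K).length) :
    (lpow s K)[q] = s[q % s.length]'(Nat.mod_lt _ hs) := by
  induction K generalizing q with
  | zero => simp [lpow] at hq
  | succ K ih =>
    simp only [lpow]
    by_cases hqs : q < s.length
    · simp [List.getElem_append_left hqs, Nat.mod_eq_of_lt hqs]
    · simp only [lpow, List.length_append] at hq
      rw [List.getElem_append_right (by omega), ih _ (by omega)]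
      simp only [← Nat.mod_eq_sub_mod (Nat.le_of_not_lt hqs)]

lemma wcat_append_of_lt (u v : List Γ) (w : ℕ → Γ) {p : ℕ} (hp : p < u.length) :
    wcat (u ++ v) w p = u[p] := by
  rw [wcat, dif_pos (by simp only [List.length_append]; omega)]
  exact List.getElem_append_left hp

lemma wcat_append_lpow_of_le (u s : List Γ) (K : ℕ) (w : ℕ → Γ) {p : ℕ}
    (hp : u.length + K * s.length ≤ p) :
    wcat (u ++ lpow s K) w p = w (p - (u.length + K * s.length)) := by
  rw [wcat, dif_neg (by simp only [List.length_append, lpow_length]; omega)]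
  simp [lpow_length]

lemma wcat_append_lpow_of_mem (u s : List Γ) (hs : 0 < s.length) (K : ℕ) (w : ℕ → Γ)
    {p : ℕ} (hp : u.length ≤ p) (hp' : p < u.length + K * s.length) :
    wcat (u ++ lpow s K) w p = s[(p - u.length) % s.length]'(Nat.mod_lt _ hs) := by
  rw [wcat, dif_pos (by simp only [List.length_append, lpow_length]; omega)]
  simp only [List.get_eq_getElem]
  rw [List.getElem_append_right hp, getElem_lpow s hs]

lemma wcat_append_lpow_eq_of_modEq (u s : List Γ) {K K' : ℕ} (w : ℕ → Γ) {p q : ℕ}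
    (hp : u.length ≤ p) (hp' : p < u.length + K * s.length)
    (hq : u.length ≤ q) (hq' : q < u.length + K' * s.length) (hpq : p ≡ q [MOD s.length]) :
    wcat (u ++ lpow s K) w p = wcat (u ++ lpow s K') w q := by
  have hs : 0 < s.length := Nat.pos_of_ne_zero fun h0 => by simp [h0] at hp'; omega
  have hoff : p - u.length ≡ q - u.length [MOD s.length] :=
    Nat.ModEq.add_right_cancel' u.length (by rwa [Nat.sub_add_cancel hp, Nat.sub_add_cancel hq])
  rw [wcat_append_lpow_of_mem u s hs K w hp hp', wcat_append_lpow_of_mem u s hs K' w hq hq']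
  congr 1

section Positions

variable {l slen t M M' N : ℕ} {a b : Fin N → ℕ}

@[simp]
lemma posExt_neg_two (a : Fin N → ℕ) : posExt l slen M N a (-2) = l := by simp [posExt]

@[simp]
lemma posExt_neg_one (a : Fin N → ℕ) :
    posExt l slen M N a (-1) = ((l + M * slen : ℕ) : ℕ∞) := by
  simp [posExt]

@[simp]
lemma posExt_succ (a : Fin N → ℕ) (i : Fin N) : posExt l slen M N a ((i : ℤ) + 1) = a i := by
  have hi := i.isLt
  rw [posExt, if_neg (by omega), if_neg (by omega), if_neg (by omega), if_neg (by omega),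
    dif_pos (by omega)]
  simp

lemma ndist_natCast (x y : ℕ) : ndist x y = x.dist y := by
  simp only [ndist, ENat.natCast_ne_top, or_self, if_false, Nat.dist]
  push_cast [ENat.natCast_sub]
  rfl

lemma _root_.Fin.neg_three_le_succ_int (i : Fin N) : (-3 : ℤ) ≤ i + 1 := by omega

lemma _root_.Fin.succ_int_le (i : Fin N) : (i : ℤ) + 1 ≤ N := by have := i.isLt; omega

namespace EFInv

variable (h : EFInv slen t N (posExt l slen M N a) (posExt l slen M' N b))
include h

lemma le_iff (i j : Fin N) : a i ≤ a j ↔ b i ≤ b j := by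
  simpa using (h _ _ i.neg_three_le_succ_int i.succ_int_le
    j.neg_three_le_succ_int j.succ_int_le).1

lemma dist_lt_iff (i j : Fin N) : (a i).dist (a j) < t ↔ (b i).dist (b j) < t := by
  simpa [ndist_natCast] using (h _ _ i.neg_three_le_succ_int i.succ_int_le
    j.neg_three_le_succ_int j.succ_int_le).2.1

lemma add_eq_of_dist_lt {i j : Fin N} (hij : (a i).dist (a j) < t) : a i + b j = b i + a j := by
  have := (h _ _ i.neg_three_le_succ_int i.succ_int_le
    j.neg_three_le_succ_int j.succ_int_le).2.2.1
  simp only [posExt_succ, ndist_natCast] at this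
  exact_mod_cast this (by exact_mod_cast hij)

lemma eq_of_le_left {i : Fin N} (hi : a i ≤ l) : b i = a i := by
  have := (h _ _ i.neg_three_le_succ_int i.succ_int_le
    i.neg_three_le_succ_int i.succ_int_le).2.2.2.1
  simp only [posExt_succ, posExt_neg_two, Nat.cast_le, Nat.cast_inj] at this
  exact this (Or.inl hi)

lemma eq_add_of_right_le {i : Fin N} (hi : l + M * slen ≤ a i) : b i = a i + slen := by
  have := (h _ _ i.neg_three_le_succ_int i.succ_int_le
    i.neg_three_le_succ_int i.succ_int_le).2.2.2.2.1
  simp only [posExt_succ, posExt_neg_one, Nat.cast_le] at this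
  exact_mod_cast this (Or.inl hi)

lemma left_le_iff (i : Fin N) : l ≤ a i ↔ l ≤ b i := by
  simpa using (h (-2) _ (by norm_num) (by omega) i.neg_three_le_succ_int i.succ_int_le).1

lemma right_le_iff (i : Fin N) : l + M * slen ≤ a i ↔ l + M' * slen ≤ b i := by
  have := (h (-1) _ (by norm_num) (by omega) i.neg_three_le_succ_int i.succ_int_le).1
  simpa only [posExt_neg_one, posExt_succ, Nat.cast_le] using this

lemma modEq_of_mem_block {i : Fin N} (hi : l ≤ a i) (hi' : a i < l + M * slen) :
    a i ≡ b i [MOD slen] := by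
  rcases hi.eq_or_lt with hl | hl
  · rw [h.eq_of_le_left hl.ge]
  have := (h _ _ i.neg_three_le_succ_int i.succ_int_le
    i.neg_three_le_succ_int i.succ_int_le).2.2.2.2.2
  simp only [posExt_succ, posExt_neg_two, posExt_neg_one, Nat.cast_lt, Nat.cast_inj,
    ndist_natCast] at this
  obtain ⟨c, hc⟩ := this (Or.inl ⟨hl, hi'⟩)
  rcases le_total (a i) (b i) with hab | hab
  · exact (Nat.modEq_iff_dvd' hab).2 ⟨c, by rw [← Nat.dist_eq_sub_of_le hab, hc, mul_comm]⟩
  · exact ((Nat.modEq_iff_dvd' hab).2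
      ⟨c, by rw [← Nat.dist_eq_sub_of_le_right hab, hc, mul_comm]⟩).symm

lemma eq_iff (i j : Fin N) : a i = a j ↔ b i = b j := by
  rw [le_antisymm_iff, le_antisymm_iff, h.le_iff, h.le_iff]

lemma lt_iff (i j : Fin N) : a i < a j ↔ b i < b j := by
  rw [← not_le, ← not_le, h.le_iff]

lemma add_one_eq_iff (ht : 1 < t) (i j : Fin N) : a i + 1 = a j ↔ b i + 1 = b j := by
  have hdist {x y : ℕ} (hxy : x + 1 = y) : x.dist y < t := by
    rwa [Nat.dist_eq_sub_of_le (by omega), ← hxy, Nat.add_sub_cancel_left]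
  constructor
  · intro hij
    have := h.add_eq_of_dist_lt (hdist hij)
    omega
  · intro hij
    have := h.add_eq_of_dist_lt ((h.dist_lt_iff i j).2 (hdist hij))
    omega

end EFInv

end Positions

lemma EFInv.wcat_eq {t N M : ℕ} {a b : Fin N → ℕ} (w1 s : List Γ) (w2 : ℕ → Γ)
    (h : EFInv s.length t N (posExt w1.length s.length M N a)
      (posExt w1.length s.length (M + 1) N b)) (i : Fin N) :
    wcat (w1 ++ lpow s M) w2 (a i) = wcat (w1 ++ lpow s (M + 1)) w2 (b i) := by
  by_cases hleft : a i < w1.length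
  · rw [h.eq_of_le_left hleft.le, wcat_append_of_lt _ _ _ hleft, wcat_append_of_lt _ _ _ hleft]
  by_cases hright : w1.length + M * s.length ≤ a i
  · have hb := h.eq_add_of_right_le hright
    rw [wcat_append_lpow_of_le _ _ _ _ hright,
      wcat_append_lpow_of_le _ _ _ _ (by rw [hb, Nat.add_one_mul]; omega)]
    congr 1
    rw [hb, Nat.add_one_mul]
    omega
  rw [not_lt] at hleft
  rw [not_le] at hright
  exact wcat_append_lpow_eq_of_modEq _ _ _ hleft hright ((h.left_le_iff i).1 hleft)
    (by by_contra! hb; exact hright.not_ge ((h.right_le_iff i).2 hb))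
    (h.modEq_of_mem_block hleft hright)

theorem invariant_winning_general {Γ : Type*} (N : ℕ)
    (w1 s : List Γ) (hs : s ≠ []) (w2 : ℕ → Γ) (M : ℕ)
    (a b : Fin N → ℕ)
    (hinv : EFInv s.length (2 * s.length) N
      (posExt w1.length s.length M N a) (posExt w1.length s.length (M + 1) N b)) :
    ∀ i j : Fin N,
      (a i = a j ↔ b i = b j) ∧
      (a i + 1 = a j ↔ b i + 1 = b j) ∧
      (a i < a j ↔ b i < b j) ∧
      wcat (w1 ++ lpow s M) w2 (a i) = wcat (w1 ++ lpow s (M + 1)) w2 (b i) := by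
  have ht : 1 < 2 * s.length := by
    have := List.length_pos_iff.mpr hs
    omega
  intro i j
  exact ⟨hinv.eq_iff i j, hinv.add_one_eq_iff ht i j, hinv.lt_iff i j, hinv.wcat_eq w1 s w2 i⟩

/-- If the chosen positions together with the anchors satisfy the invariant
with threshold `2·|s|`, then they form a winning (partially isomorphic)
configuration for the Duplicator. -/
theorem invariant_winning {Γ : Type*} [Fintype Γ] (N : ℕ) (hN : 1 ≤ N)
    (w1 s : List Γ) (hs : s ≠ []) (w2 : ℕ → Γ) (M : ℕ) (hM : 2 ^ (N + 1) < M)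
    (a b : Fin N → ℕ)
    (hinv : EFInv s.length (2 * s.length) N
      (posExt w1.length s.length M N a) (posExt w1.length s.length (M + 1) N b)) :
    ∀ i j : Fin N,
      (a i = a j ↔ b i = b j) ∧
      (a i + 1 = a j ↔ b i + 1 = b j) ∧
      (a i < a j ↔ b i < b j) ∧
      wcat (w1 ++ lpow s M) w2 (a i) = wcat (w1 ++ lpow s (M + 1)) w2 (b i) :=
  invariant_winning_general N w1 s hs w2 M a b hinv

end Stmt3
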